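/- The cortical distance separates points of the feature space ℝ²×S¹: for p = (x,y,θ) with θ ∈ (−π, π], d(p, (0,0,0)) = 0 if and only if x = 0, y = 0 and θ = 0. -/

import Mathlib

open MeasureTheory

/-- Rotation of the plane by angle `θ`. -/
noncomputable def rot (θ : ℝ) (w : ℝ × ℝ) : ℝ × ℝ :=
  (w.1 * Real.cos θ - w.2 * Real.sin θ, w.1 * Real.sin θ + w.2 * Real.cos θ)

/-- The mother Gabor filter `ψ₀(u,v) = exp(2πiu/λ)·exp(−(u²+v²)/(2σ²))`. -/
noncomputable def gaborMother (lam sg : ℝ) (w : ℝ × ℝ) : ℂ :=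
  Complex.exp (2 * (Real.pi : ℂ) * Complex.I * (w.1 : ℂ) / (lam : ℂ)) *
    Complex.exp (-(((w.1 ^ 2 + w.2 ^ 2) / (2 * sg ^ 2) : ℝ) : ℂ))

/-- The Gabor filter `ψ_{x,y,θ}(u,v) = ψ₀(R_{−θ}((u,v)−(x,y)))` for `p = (x,y,θ)`. -/
noncomputable def gabor (lam sg : ℝ) (p : ℝ × ℝ × ℝ) (w : ℝ × ℝ) : ℂ :=
  gaborMother lam sg (rot (-p.2.2) (w - (p.1, p.2.1)))

/-- The cortical distance `d(p,q) = ‖ψ_p − ψ_q‖_{L²}`. -/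
noncomputable def cdist (lam sg : ℝ) (p q : ℝ × ℝ × ℝ) : ℝ :=
  Real.sqrt (∫ w : ℝ × ℝ, ‖gabor lam sg p w - gabor lam sg q w‖ ^ 2)

/-!
If `d(p, 0) = 0`, then `ψ_p = ψ_0` almost everywhere, hence everywhere by continuity. The modulus
of `ψ_p` is a Gaussian centred at `(x, y)`, so the centres agree. Along the first axis `ψ_p` then
oscillates with frequency `cos θ / λ` and `ψ_0` with frequency `1 / λ`, so `cos θ = 1`, which
forces `θ = 0` on `(−π, π]`.
-/

open Real Complex

theorem eq_of_integral_norm_sub_sq_eq_zero {X E : Type*} [TopologicalSpace X] [MeasurableSpace X]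
    [OpensMeasurableSpace X] {μ : Measure X} [μ.IsOpenPosMeasure] [NormedAddCommGroup E]
    {f g : X → E} (hf : Continuous f) (hg : Continuous g) (hf₂ : MemLp f 2 μ)
    (hg₂ : MemLp g 2 μ) (h : ∫ x, ‖f x - g x‖ ^ 2 ∂μ = 0) : f = g := by
  have hint : Integrable (fun x => ‖f x - g x‖ ^ 2) μ :=
    (memLp_two_iff_integrable_sq_norm (hf₂.sub hg₂).1).1 (hf₂.sub hg₂)
  have hae := (integral_eq_zero_iff_of_nonneg (fun x => by positivity) hint).1 h
  refine (hf.ae_eq_iff_eq μ hg).1 ?_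
  filter_upwards [hae] with x hx
  simpa [sub_eq_zero] using hx

theorem eq_zero_of_forall_exp_mul_I_eq_one {a : ℝ} (h : ∀ t : ℝ, exp (↑(a * t) * I) = 1) :
    a = 0 := by
  by_contra ha
  have := h (π / a)
  rw [mul_div_cancel₀ _ ha, exp_pi_mul_I] at this
  norm_num at this

theorem integrable_exp_neg_mul_sq_sub_add_sq_sub {b : ℝ} (hb : 0 < b) (c : ℝ × ℝ) :
    Integrable fun w : ℝ × ℝ => Real.exp (-b * ((w.1 - c.1) ^ 2 + (w.2 - c.2) ^ 2)) := by
  have h₁ : Integrable fun t : ℝ => Real.exp (-b * t ^ 2) := integrable_exp_neg_mul_sq hb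
  refine ((h₁.comp_sub_right c.1).mul_prod (h₁.comp_sub_right c.2)).congr
    (.of_forall fun w => ?_)
  simp only [← Real.exp_add]
  ring_nf

theorem gabor_apply (lam sg : ℝ) (p : ℝ × ℝ × ℝ) (w : ℝ × ℝ) :
    gabor lam sg p w =
      exp (↑(2 * π * ((w.1 - p.1) * Real.cos p.2.2 + (w.2 - p.2.1) * Real.sin p.2.2) / lam) * I) *
        ↑(Real.exp (-(((w.1 - p.1) ^ 2 + (w.2 - p.2.1) ^ 2) / (2 * sg ^ 2)))) := by
  have hrot : ∀ u v : ℝ, (u * Real.cos (-p.2.2) - v * Real.sin (-p.2.2)) ^ 2 +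
      (u * Real.sin (-p.2.2) + v * Real.cos (-p.2.2)) ^ 2 = u ^ 2 + v ^ 2 := fun u v => by
    linear_combination (u ^ 2 + v ^ 2) * Real.sin_sq_add_cos_sq (-p.2.2)
  simp only [gabor, gaborMother, rot, Prod.fst_sub, Prod.snd_sub]
  rw [hrot]
  simp only [ofReal_exp, Real.cos_neg, Real.sin_neg]
  congr 2 <;> push_cast <;> ring

theorem norm_gabor (lam sg : ℝ) (p : ℝ × ℝ × ℝ) (w : ℝ × ℝ) :
    ‖gabor lam sg p w‖ = Real.exp (-(((w.1 - p.1) ^ 2 + (w.2 - p.2.1) ^ 2) / (2 * sg ^ 2))) := by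
  rw [gabor_apply, norm_mul, norm_exp_ofReal_mul_I, one_mul, norm_real, Real.norm_eq_abs,
    abs_of_pos (Real.exp_pos _)]

theorem continuous_gabor (lam sg : ℝ) (p : ℝ × ℝ × ℝ) : Continuous (gabor lam sg p) := by
  unfold gabor gaborMother rot
  fun_prop

theorem memLp_gabor (lam : ℝ) {sg : ℝ} (hsg : sg ≠ 0) (p : ℝ × ℝ × ℝ) :
    MemLp (gabor lam sg p) 2 := by
  rw [memLp_two_iff_integrable_sq_norm (continuous_gabor lam sg p).aestronglyMeasurable]
  refine (integrable_exp_neg_mul_sq_sub_add_sq_sub (b := 1 / sg ^ 2) (by positivity)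
    (p.1, p.2.1)).congr (.of_forall fun w => ?_)
  simp only [norm_gabor, sq, ← Real.exp_add]
  field_simp
  ring_nf

theorem gabor_eq_of_cdist_eq_zero (lam : ℝ) {sg : ℝ} (hsg : sg ≠ 0) {p q : ℝ × ℝ × ℝ}
    (h : cdist lam sg p q = 0) : gabor lam sg p = gabor lam sg q :=
  eq_of_integral_norm_sub_sq_eq_zero (continuous_gabor lam sg p) (continuous_gabor lam sg q)
    (memLp_gabor lam hsg p) (memLp_gabor lam hsg q)
    (le_antisymm (Real.sqrt_eq_zero'.1 h) (integral_nonneg fun w => by positivity))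

theorem center_eq_of_gabor_eq (lam : ℝ) {sg : ℝ} (hsg : sg ≠ 0) {p q : ℝ × ℝ × ℝ}
    (h : gabor lam sg p = gabor lam sg q) : p.1 = q.1 ∧ p.2.1 = q.2.1 := by
  have hnorm := congrArg norm (congrFun h (p.1, p.2.1))
  simp only [norm_gabor, sub_self, ne_eq, OfNat.ofNat_ne_zero, not_false_eq_true, zero_pow,
    add_zero, zero_div, neg_zero, Real.exp_zero] at hnorm
  have hdist : (p.1 - q.1) ^ 2 + (p.2.1 - q.2.1) ^ 2 = 0 := by
    have := Real.exp_eq_one_iff _ |>.1 hnorm.symm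
    field_simp at this
    linarith
  constructor <;> nlinarith [sq_nonneg (p.1 - q.1), sq_nonneg (p.2.1 - q.2.1)]

theorem cos_eq_of_gabor_eq {lam : ℝ} (hlam : lam ≠ 0) (sg a b θ φ : ℝ)
    (h : gabor lam sg (a, b, θ) = gabor lam sg (a, b, φ)) : Real.cos θ = Real.cos φ := by
  have hphase : ∀ t : ℝ, exp (↑(2 * π * (Real.cos θ - Real.cos φ) / lam * t) * I) = 1 := by
    intro t
    have ht := congrFun h (a + t, b)
    simp only [gabor_apply, add_sub_cancel_left, sub_self, zero_mul, add_zero] at ht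
    rw [mul_left_inj' (ofReal_ne_zero.2 (Real.exp_pos _).ne')] at ht
    rw [show (↑(2 * π * (Real.cos θ - Real.cos φ) / lam * t) * I : ℂ) =
        ↑(2 * π * (t * Real.cos θ) / lam) * I - ↑(2 * π * (t * Real.cos φ) / lam) * I by
          push_cast; ring, Complex.exp_sub, ht, div_self (Complex.exp_ne_zero _)]
  have := eq_zero_of_forall_exp_mul_I_eq_one hphase
  rw [div_eq_zero_iff, mul_eq_zero] at this
  rcases this with (h2π | hcos) | hl
  · exact absurd h2π (by positivity)
  · exact sub_eq_zero.1 hcos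
  · exact absurd hl hlam

/-- The cortical distance separates the points of `ℝ² × S¹`: for `θ ∈ (−π, π]`,
`d((x,y,θ),(0,0,0)) = 0` iff `x = 0`, `y = 0` and `θ = 0`. -/
theorem statement4 (lam sg : ℝ) (hlam : 0 < lam) (hsg : 0 < sg) (x y θ : ℝ)
    (hθ : θ ∈ Set.Ioc (-Real.pi) Real.pi) :
    cdist lam sg (x, y, θ) (0, 0, 0) = 0 ↔ x = 0 ∧ y = 0 ∧ θ = 0 := by
  constructor
  · intro h
    have hψ := gabor_eq_of_cdist_eq_zero lam hsg.ne' h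
    obtain ⟨rfl, rfl⟩ : x = 0 ∧ y = 0 := center_eq_of_gabor_eq lam hsg.ne' hψ
    have hcos : Real.cos θ = 1 := by
      simpa using cos_eq_of_gabor_eq hlam.ne' sg 0 0 θ 0 hψ
    refine ⟨rfl, rfl, (Real.cos_eq_one_iff_of_lt_of_lt ?_ ?_).1 hcos⟩
    · linarith [hθ.1, Real.pi_pos]
    · linarith [hθ.2, Real.pi_pos]
  · rintro ⟨rfl, rfl, rfl⟩
    simp [cdist]
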